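/- Let 1 < p < ∞, 0 < s < 1, and let Ω ⊂ ℝ^N be an open set. For every u ∈ C_0^∞(Ω), s(1-s) ∫₀^∞ t^{-sp} K(t,u)^p dt/t ≤ ‖u‖_{L^p(Ω)}^{p(1-s)} ‖∇u‖_{L^p(Ω)}^{sp}, where K(t,u) = inf_{v ∈ C_0^∞(Ω)} ( ‖u-v‖_{L^p(Ω)} + t ‖∇v‖_{L^p(Ω)} ). -/

import Mathlib

open MeasureTheory Metric Filter
open scoped Pointwise Topology NNReal

noncomputable section

abbrev Euc (N : ℕ) := EuclideanSpace ℝ (Fin N)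

/-- `u ∈ C_0^∞(Ω)`: smooth, compactly supported, with support inside `Ω`. -/
def IsTestFn {N : ℕ} (Ω : Set (Euc N)) (u : Euc N → ℝ) : Prop :=
  ContDiff ℝ (⊤ : ℕ∞) u ∧ HasCompactSupport u ∧ tsupport u ⊆ Ω

/-- The `L^p` norm of `u`. -/
def lpNorm {N : ℕ} (p : ℝ) (u : Euc N → ℝ) : ℝ := (∫ x, |u x| ^ p) ^ (1/p)

/-- The `L^p` norm of the gradient of `u`. -/
def gradLpNorm {N : ℕ} (p : ℝ) (u : Euc N → ℝ) : ℝ := (∫ x, ‖fderiv ℝ u x‖ ^ p) ^ (1/p)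

/-- Gagliardo–Slobodeckiĭ seminorm to the power `p`, double integral over `A × A`. -/
def gagliardoOn {N : ℕ} (A : Set (Euc N)) (s p : ℝ) (u : Euc N → ℝ) : ℝ :=
  ∫ x in A, ∫ y in A, |u x - u y| ^ p / ‖x - y‖ ^ ((N : ℝ) + s * p)

/-- Gagliardo–Slobodeckiĭ seminorm to the power `p`, over `ℝ^N × ℝ^N`. -/
def gagliardo {N : ℕ} (s p : ℝ) (u : Euc N → ℝ) : ℝ :=
  ∫ x, ∫ y, |u x - u y| ^ p / ‖x - y‖ ^ ((N : ℝ) + s * p)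

/-- The `K`-functional between `L^p(Ω)` and `D_0^{1,p}(Ω)`. -/
def Kfun {N : ℕ} (Ω : Set (Euc N)) (p t : ℝ) (u : Euc N → ℝ) : ℝ :=
  sInf { r | ∃ v, IsTestFn Ω v ∧ r = lpNorm p (u - v) + t * gradLpNorm p v }

/-- The `p`-th power of the real interpolation norm of parameters `(s,p)`. -/
def interpNormP {N : ℕ} (Ω : Set (Euc N)) (s p : ℝ) (u : Euc N → ℝ) : ℝ :=
  ∫ t in Set.Ioi (0:ℝ), t ^ (-(s*p)) * (Kfun Ω p t u) ^ p / t

/-- Sharp Poincaré constant `λ_p^1(Ω)`. -/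
def lam1 {N : ℕ} (Ω : Set (Euc N)) (p : ℝ) : ℝ :=
  sInf { r | ∃ u, IsTestFn Ω u ∧ lpNorm p u = 1 ∧ r = (gradLpNorm p u) ^ p }

/-- Sharp fractional Poincaré constant `λ_p^s(Ω)`. -/
def lamS {N : ℕ} (Ω : Set (Euc N)) (s p : ℝ) : ℝ :=
  sInf { r | ∃ u, IsTestFn Ω u ∧ lpNorm p u = 1 ∧ r = gagliardo s p u }

/-- Sharp interpolation Poincaré constant `Λ_p^s(Ω)`. -/
def LamS {N : ℕ} (Ω : Set (Euc N)) (s p : ℝ) : ℝ :=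
  sInf { r | ∃ u, IsTestFn Ω u ∧ lpNorm p u = 1 ∧ r = interpNormP Ω s p u }

/-- Fractional `(s,p)`-capacity of a set `F ⊂ ℝ^N`. -/
def capSP {N : ℕ} (s p : ℝ) (F : Set (Euc N)) : ℝ :=
  sInf { r | ∃ u : Euc N → ℝ, ContDiff ℝ (⊤ : ℕ∞) u ∧ HasCompactSupport u ∧
    (∀ x, 0 ≤ u x) ∧ (∀ x ∈ F, 1 ≤ u x) ∧ r = gagliardo s p u }

/-- Volume of the unit ball of `ℝ^N`. -/
def omegaN (N : ℕ) : ℝ := (volume (Metric.ball (0 : Euc N) 1)).toReal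


section AuxInterp

variable {N : ℕ}

lemma lpNorm_nonneg' (p : ℝ) (u : Euc N → ℝ) : 0 ≤ lpNorm p u :=
  Real.rpow_nonneg (integral_nonneg fun x => Real.rpow_nonneg (abs_nonneg _) _) _

lemma gradLpNorm_nonneg' (p : ℝ) (u : Euc N → ℝ) : 0 ≤ gradLpNorm p u :=
  Real.rpow_nonneg (integral_nonneg fun x => Real.rpow_nonneg (norm_nonneg _) _) _

lemma isTestFn_zero' (Ω : Set (Euc N)) : IsTestFn Ω (0 : Euc N → ℝ) := by
  have h : tsupport (0 : Euc N → ℝ) = ∅ := by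
    simp [tsupport, Function.support_zero]
  exact ⟨contDiff_const, by simp [HasCompactSupport, h], by simp [h]⟩

lemma lpNorm_zero' {p : ℝ} (hp : p ≠ 0) : lpNorm p (0 : Euc N → ℝ) = 0 := by
  simp [_root_.lpNorm, Real.zero_rpow hp, Real.zero_rpow (one_div_ne_zero hp), Real.zero_rpow (inv_ne_zero hp)]

lemma gradLpNorm_zero' {p : ℝ} (hp : p ≠ 0) : gradLpNorm p (0 : Euc N → ℝ) = 0 := by
  have h : fderiv ℝ (0 : Euc N → ℝ) = 0 := by
    ext x : 1
    exact fderiv_const_apply (0 : ℝ)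
  simp [gradLpNorm, h, Real.zero_rpow hp, Real.zero_rpow (one_div_ne_zero hp), Real.zero_rpow (inv_ne_zero hp)]

lemma Kfun_bddBelow (Ω : Set (Euc N)) (p : ℝ) {t : ℝ} (ht : 0 ≤ t) (u : Euc N → ℝ) :
    BddBelow { r | ∃ v, IsTestFn Ω v ∧ r = lpNorm p (u - v) + t * gradLpNorm p v } := by
  refine ⟨0, ?_⟩
  rintro r ⟨v, hv, rfl⟩
  exact add_nonneg (lpNorm_nonneg' _ _) (mul_nonneg ht (gradLpNorm_nonneg' _ _))

lemma Kfun_le' (Ω : Set (Euc N)) (p : ℝ) {t : ℝ} (ht : 0 ≤ t) (u v : Euc N → ℝ)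
    (hv : IsTestFn Ω v) :
    Kfun Ω p t u ≤ lpNorm p (u - v) + t * gradLpNorm p v :=
  csInf_le (Kfun_bddBelow Ω p ht u) ⟨v, hv, rfl⟩

lemma Kfun_nonneg' (Ω : Set (Euc N)) (p : ℝ) {t : ℝ} (ht : 0 ≤ t) (u : Euc N → ℝ) :
    0 ≤ Kfun Ω p t u := by
  apply Real.sInf_nonneg
  rintro r ⟨v, hv, rfl⟩
  exact add_nonneg (lpNorm_nonneg' _ _) (mul_nonneg ht (gradLpNorm_nonneg' _ _))

lemma Kfun_monoOn (Ω : Set (Euc N)) (p : ℝ) (u : Euc N → ℝ) :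
    MonotoneOn (fun t => Kfun Ω p t u) (Set.Ioi (0:ℝ)) := by
  intro t₁ h₁ t₂ _ h
  refine le_csInf ⟨_, 0, isTestFn_zero' Ω, rfl⟩ ?_
  rintro r ⟨v, hv, rfl⟩
  refine (Kfun_le' Ω p (le_of_lt h₁) u v hv).trans ?_
  have hg := gradLpNorm_nonneg' p v
  nlinarith

end AuxInterp

/-- Interpolation inequality:
`s(1-s) ‖u‖_{X_0^{s,p}(Ω)}^p ≤ ‖u‖_{L^p}^{p(1-s)} ‖∇u‖_{L^p}^{sp}` for `u ∈ C_0^∞(Ω)`. -/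
theorem interpolation_inequality {N : ℕ} (p s : ℝ) (hp : 1 < p) (hs : s ∈ Set.Ioo (0:ℝ) 1)
    (Ω : Set (Euc N)) (hΩ : IsOpen Ω) (u : Euc N → ℝ) (hu : IsTestFn Ω u) :
    s * (1 - s) * interpNormP Ω s p u ≤
      lpNorm p u ^ (p * (1 - s)) * gradLpNorm p u ^ (s * p) := by
  obtain ⟨hs0, hs1⟩ := hs
  have hp0 : (0:ℝ) < p := lt_trans one_pos hp
  have hp0' : p ≠ 0 := ne_of_gt hp0
  set A := lpNorm p u with hA
  set B := gradLpNorm p u with hB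
  have hA0 : 0 ≤ A := lpNorm_nonneg' p u
  have hB0 : 0 ≤ B := gradLpNorm_nonneg' p u
  have hKA : ∀ t : ℝ, 0 ≤ t → Kfun Ω p t u ≤ A := by
    intro t ht
    have h := Kfun_le' Ω p ht u 0 (isTestFn_zero' Ω)
    simpa [sub_zero, gradLpNorm_zero' hp0'] using h
  have hKB : ∀ t : ℝ, 0 ≤ t → Kfun Ω p t u ≤ t * B := by
    intro t ht
    have h := Kfun_le' Ω p ht u u hu
    simpa [sub_self, lpNorm_zero' hp0'] using h
  have hRHS0 : 0 ≤ A ^ (p * (1 - s)) * B ^ (s * p) :=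
    mul_nonneg (Real.rpow_nonneg hA0 _) (Real.rpow_nonneg hB0 _)
  by_cases hdeg : A = 0 ∨ B = 0
  · -- degenerate case: K ≡ 0 on (0, ∞)
    have hK : ∀ t ∈ Set.Ioi (0:ℝ), Kfun Ω p t u = 0 := by
      intro t ht
      refine le_antisymm ?_ (Kfun_nonneg' Ω p (le_of_lt ht) u)
      rcases hdeg with h0 | h0
      · simpa [h0] using hKA t (le_of_lt ht)
      · simpa [h0] using hKB t (le_of_lt ht)
    have hI : interpNormP Ω s p u = 0 := by
      rw [interpNormP]
      rw [setIntegral_congr_fun measurableSet_Ioi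
        (g := fun _ => (0:ℝ)) (fun t ht => by
          simp [hK t ht, Real.zero_rpow hp0'])]
      simp
    rw [hI, mul_zero]
    exact hRHS0
  · push_neg at hdeg
    have hApos : 0 < A := lt_of_le_of_ne hA0 (Ne.symm hdeg.1)
    have hBpos : 0 < B := lt_of_le_of_ne hB0 (Ne.symm hdeg.2)
    set T := A / B with hT
    have hTpos : 0 < T := div_pos hApos hBpos
    set g : ℝ → ℝ := fun t =>
      if t ≤ T then B ^ p * t ^ (p - s*p - 1) else A ^ p * t ^ (-(s*p) - 1) with hg
    -- pointwise bound
    have hfg : ∀ t ∈ Set.Ioi (0:ℝ), t ^ (-(s*p)) * (Kfun Ω p t u) ^ p / t ≤ g t := by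
      intro t ht
      simp only [Set.mem_Ioi] at ht
      have hK0 : 0 ≤ Kfun Ω p t u := Kfun_nonneg' Ω p (le_of_lt ht) u
      by_cases hle : t ≤ T
      · have h1 : (Kfun Ω p t u) ^ p ≤ (t * B) ^ p :=
          Real.rpow_le_rpow hK0 (hKB t (le_of_lt ht)) (le_of_lt hp0)
        have h2 : t ^ (-(s*p)) * (Kfun Ω p t u) ^ p / t ≤ t ^ (-(s*p)) * (t * B) ^ p / t := by
          gcongr
        refine h2.trans_eq ?_
        rw [hg]
        simp only [if_pos hle]
        rw [Real.mul_rpow (le_of_lt ht) hB0,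
          show p - s*p - 1 = -(s*p) + p + (-1) by ring,
          Real.rpow_add ht, Real.rpow_add ht, Real.rpow_neg_one]
        field_simp
        try ring
      · have h1 : (Kfun Ω p t u) ^ p ≤ A ^ p :=
          Real.rpow_le_rpow hK0 (hKA t (le_of_lt ht)) (le_of_lt hp0)
        have h2 : t ^ (-(s*p)) * (Kfun Ω p t u) ^ p / t ≤ t ^ (-(s*p)) * A ^ p / t := by
          gcongr
        refine h2.trans_eq ?_
        rw [hg]
        simp only [if_neg hle]
        rw [show -(s*p) - 1 = -(s*p) + (-1) by ring, Real.rpow_add ht, Real.rpow_neg_one]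
        field_simp
        try ring
    have hf_nonneg : ∀ t ∈ Set.Ioi (0:ℝ), 0 ≤ t ^ (-(s*p)) * (Kfun Ω p t u) ^ p / t := by
      intro t ht
      simp only [Set.mem_Ioi] at ht
      have hK0 : 0 ≤ Kfun Ω p t u := Kfun_nonneg' Ω p (le_of_lt ht) u
      exact div_nonneg (mul_nonneg (Real.rpow_nonneg (le_of_lt ht) _)
        (Real.rpow_nonneg hK0 _)) (le_of_lt ht)
    -- integrability of g
    have hexp1 : (-1:ℝ) < p - s*p - 1 := by nlinarith
    have hexp2 : -(s*p) - 1 < (-1:ℝ) := by nlinarith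
    have hint1 : IntegrableOn (fun t => B ^ p * t ^ (p - s*p - 1)) (Set.Ioc 0 T) := by
      have := (intervalIntegral.intervalIntegrable_rpow' (a := (0:ℝ)) (b := T) hexp1)
      rw [intervalIntegrable_iff_integrableOn_Ioc_of_le (le_of_lt hTpos)] at this
      exact this.const_mul _
    have hint2 : IntegrableOn (fun t => A ^ p * t ^ (-(s*p) - 1)) (Set.Ioi T) :=
      (integrableOn_Ioi_rpow_of_lt hexp2 hTpos).const_mul _
    have hg1 : IntegrableOn g (Set.Ioc 0 T) :=
      hint1.congr_fun (fun t ht => by simp [hg, if_pos ht.2]) measurableSet_Ioc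
    have hg2 : IntegrableOn g (Set.Ioi T) :=
      hint2.congr_fun (fun t ht => by simp [hg, if_neg (not_le.mpr (Set.mem_Ioi.mp ht))]) measurableSet_Ioi
    have hunion : Set.Ioc (0:ℝ) T ∪ Set.Ioi T = Set.Ioi 0 := Set.Ioc_union_Ioi_eq_Ioi (le_of_lt hTpos)
    have hgint : IntegrableOn g (Set.Ioi (0:ℝ)) := by
      rw [← hunion]; exact hg1.union hg2
    -- measurability and integrability of f
    have hKmeas : AEMeasurable (fun t => Kfun Ω p t u) (volume.restrict (Set.Ioi (0:ℝ))) :=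
      aemeasurable_restrict_of_monotoneOn measurableSet_Ioi (Kfun_monoOn Ω p u)
    have hfmeas : AEMeasurable (fun t => t ^ (-(s*p)) * (Kfun Ω p t u) ^ p / t)
        (volume.restrict (Set.Ioi (0:ℝ))) := by
      refine AEMeasurable.div ?_ aemeasurable_id'
      refine AEMeasurable.mul ?_ ?_
      · exact ((measurable_id.pow_const _ : Measurable fun t : ℝ => t ^ (-(s*p)))).aemeasurable
      · exact ((Real.continuous_rpow_const (le_of_lt hp0)).measurable).comp_aemeasurable hKmeas
    have hfint : IntegrableOn (fun t => t ^ (-(s*p)) * (Kfun Ω p t u) ^ p / t)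
        (Set.Ioi (0:ℝ)) := by
      refine Integrable.mono' hgint hfmeas.aestronglyMeasurable ?_
      refine (ae_restrict_iff' measurableSet_Ioi).mpr (ae_of_all _ fun t ht => ?_)
      rw [Real.norm_of_nonneg (hf_nonneg t ht)]
      exact hfg t ht
    -- comparison of integrals
    have hle : interpNormP Ω s p u ≤ ∫ t in Set.Ioi (0:ℝ), g t := by
      rw [interpNormP]
      exact setIntegral_mono_on hfint hgint measurableSet_Ioi hfg
    -- compute ∫ g
    have hsplit : ∫ t in Set.Ioi (0:ℝ), g t
        = (∫ t in Set.Ioc (0:ℝ) T, g t) + ∫ t in Set.Ioi T, g t := by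
      rw [← hunion, setIntegral_union (Set.Ioc_disjoint_Ioi le_rfl) measurableSet_Ioi hg1 hg2]
    have hI1 : ∫ t in Set.Ioc (0:ℝ) T, g t = B ^ p * (T ^ (p - s*p) / (p - s*p)) := by
      rw [setIntegral_congr_fun measurableSet_Ioc
        (g := fun t => B ^ p * t ^ (p - s*p - 1)) (fun t ht => by simp [hg, if_pos ht.2])]
      rw [MeasureTheory.integral_const_mul, ← intervalIntegral.integral_of_le (le_of_lt hTpos),
        integral_rpow (Or.inl hexp1)]
      have h1 : p - s*p - 1 + 1 = p - s*p := by ring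
      rw [h1, Real.zero_rpow (by nlinarith : p - s*p ≠ 0)]
      ring
    have hI2 : ∫ t in Set.Ioi T, g t = A ^ p * (T ^ (-(s*p)) / (s*p)) := by
      rw [setIntegral_congr_fun measurableSet_Ioi
        (g := fun t => A ^ p * t ^ (-(s*p) - 1)) (fun t ht => by
          simp [hg, if_neg (not_le.mpr (Set.mem_Ioi.mp ht))])]
      rw [MeasureTheory.integral_const_mul, integral_Ioi_rpow_of_lt hexp2 hTpos]
      have h1 : -(s*p) - 1 + 1 = -(s*p) := by ring
      rw [h1]
      field_simp
    -- evaluate powers of T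
    have hTpow : ∀ c : ℝ, T ^ c = A ^ c * B ^ (-c) := by
      intro c
      rw [hT, Real.div_rpow hA0 hB0, Real.rpow_neg hB0, div_eq_mul_inv]
    have hval : ∫ t in Set.Ioi (0:ℝ), g t
        = A ^ (p - s*p) * B ^ (s*p) * (1/(p - s*p) + 1/(s*p)) := by
      rw [hsplit, hI1, hI2, hTpow, hTpow]
      rw [show B ^ p * (A ^ (p - s*p) * B ^ (-(p - s*p)) / (p - s*p))
          = A ^ (p - s*p) * (B ^ p * B ^ (-(p - s*p))) * (1/(p - s*p)) by ring,
        show A ^ p * (A ^ (-(s*p)) * B ^ (-(-(s*p))) / (s*p))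
          = (A ^ p * A ^ (-(s*p))) * B ^ (-(-(s*p))) * (1/(s*p)) by ring,
        ← Real.rpow_add hBpos, ← Real.rpow_add hApos,
        show p + -(p - s*p) = s*p by ring, show p + -(s*p) = p - s*p by ring,
        neg_neg]
      ring
    -- final algebra
    have hcoef : s * (1 - s) * (1/(p - s*p) + 1/(s*p)) = 1 / p := by
      have h1 : p - s*p ≠ 0 := by nlinarith
      have h2 : s*p ≠ 0 := by positivity
      field_simp
      ring
    have hC0 : 0 ≤ A ^ (p - s*p) * B ^ (s*p) :=
      mul_nonneg (Real.rpow_nonneg hA0 _) (Real.rpow_nonneg hB0 _)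
    have hss : 0 ≤ s * (1 - s) := by nlinarith
    calc s * (1 - s) * interpNormP Ω s p u
        ≤ s * (1 - s) * (A ^ (p - s*p) * B ^ (s*p) * (1/(p - s*p) + 1/(s*p))) := by
          rw [← hval]; exact mul_le_mul_of_nonneg_left hle hss
      _ = A ^ (p - s*p) * B ^ (s*p) * (s * (1 - s) * (1/(p - s*p) + 1/(s*p))) := by ring
      _ = A ^ (p - s*p) * B ^ (s*p) * (1/p) := by rw [hcoef]
      _ ≤ A ^ (p - s*p) * B ^ (s*p) := by
          apply mul_le_of_le_one_right hC0
          rw [div_le_one hp0]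
          linarith
      _ = A ^ (p * (1 - s)) * B ^ (s*p) := by rw [show p - s*p = p * (1-s) by ring]
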